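/- arXiv:1503.07350 — 3 statements merged into one kernel-verified Lean document; each statement's English description precedes it below -/
import Mathlib

section
/- Let T ∈ B(X) and S ∈ B(Y) be nonzero compact operators on Banach spaces that are equivalent after extension. Then the operator ideals generated by T and S coincide: I_T = I_S. -/
/-!
Comparing entries in `T ⊕ 1 = E (S ⊕ 1) F` gives `T (1 - B T) = R S R'` for suitable operators
`B`, `R`, `R'`. Since `T` is compact, so is `c = B T`, and by Riesz theory `1 - c` is Fredholm:
some `v` satisfies `(1 - c) v = 1 - k` with `k` of finite rank. Hence `T = R S R' v + T k`, and
since every finite-rank operator factors through the nonzero operator `S`, `T ∈ I_S`. The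
hypothesis is symmetric in `T` and `S`, so also `S ∈ I_T`, and the two ideals coincide.
-/

open ContinuousLinearMap

/-- Membership in the operator ideal generated by an operator `T ∈ B(X, Y)`:
`W ∈ I_T(Z₁, Z₂)` iff `W` is a finite sum `Σⱼ Rⱼ ∘ T ∘ Rⱼ'`. -/
def InOperatorIdeal
    (X Y : Type*) [NormedAddCommGroup X] [NormedSpace ℂ X] [CompleteSpace X]
    [NormedAddCommGroup Y] [NormedSpace ℂ Y] [CompleteSpace Y]
    (T : X →L[ℂ] Y)
    (Z₁ Z₂ : Type*) [NormedAddCommGroup Z₁] [NormedSpace ℂ Z₁] [CompleteSpace Z₁]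
    [NormedAddCommGroup Z₂] [NormedSpace ℂ Z₂] [CompleteSpace Z₂]
    (W : Z₁ →L[ℂ] Z₂) : Prop :=
  ∃ (n : ℕ) (R : Fin n → (Y →L[ℂ] Z₂)) (R' : Fin n → (Z₁ →L[ℂ] X)),
    W = ∑ j, R j ∘L T ∘L R' j

theorem IsCompactOperator.isCompactOperator_id_of_isOpenMap {E F : Type*} [Zero E] [Zero F]
    [TopologicalSpace E] [TopologicalSpace F] {f : E → F} (hf : IsCompactOperator f)
    (hopen : IsOpenMap f) (hf0 : f 0 = 0) : IsCompactOperator (id : F → F) := by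
  obtain ⟨K, hK, hKf⟩ := hf
  refine ⟨K, hK, Filter.mem_of_superset ?_ (Set.image_preimage_subset f K)⟩
  simpa [hf0] using hopen.image_mem_nhds hKf

section CompactPerturbationOfId

variable {𝕜 X : Type*} [RCLike 𝕜] [NormedAddCommGroup X] [NormedSpace 𝕜 X] {c : X →L[𝕜] X}

theorem IsCompactOperator.finiteDimensional_ker_id_sub (hc : IsCompactOperator c) :
    FiniteDimensional 𝕜 (ContinuousLinearMap.id 𝕜 X - c).ker := by
  have hfix : ∀ x ∈ (ContinuousLinearMap.id 𝕜 X - c).ker, c x = x := fun x hx =>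
    (sub_eq_zero.mp hx).symm
  have hmaps : ∀ x ∈ (ContinuousLinearMap.id 𝕜 X - c).ker,
      (c : X →ₗ[𝕜] X) x ∈ (ContinuousLinearMap.id 𝕜 X - c).ker := fun x hx => by
    simp [hfix x hx]
  have hres := hc.restrict hmaps (isClosed_ker _)
  have hid : ⇑((c : X →ₗ[𝕜] X).restrict hmaps) = id := funext fun x => Subtype.ext (hfix x x.2)
  exact .of_isCompactOperator_id (hid ▸ hres)

theorem IsCompactOperator.finiteDimensional_quotient_range_id_sub (hc : IsCompactOperator c)
    [IsClosed ((ContinuousLinearMap.id 𝕜 X - c).range : Set X)] :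
    FiniteDimensional 𝕜 (X ⧸ (ContinuousLinearMap.id 𝕜 X - c).range) := by
  set R := (ContinuousLinearMap.id 𝕜 X - c).range
  -- the quotient map kills `id - c`, so it factors through the compact operator `c`
  have hπ : R.mkQL ∘L c = R.mkQL := by
    ext x
    have hx : x - c x ∈ R := ⟨x, rfl⟩
    have h0 := (Submodule.Quotient.mk_eq_zero R).2 hx
    rw [Submodule.Quotient.mk_sub, sub_eq_zero] at h0
    exact h0.symm
  apply FiniteDimensional.of_isCompactOperator_id
  refine (hc.clm_comp R.mkQL).isCompactOperator_id_of_isOpenMap ?_ (by simp)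
  rw [← coe_comp, hπ]
  exact R.isOpenQuotientMap_mkQL.isOpenMap

open Filter Topology in
theorem IsCompactOperator.exists_antilipschitzWith_domRestrict_id_sub (hc : IsCompactOperator c)
    {M : Submodule 𝕜 X} (hM : IsClosed (M : Set X))
    (hMN : Disjoint M (ContinuousLinearMap.id 𝕜 X - c).ker) :
    ∃ K, AntilipschitzWith K ((ContinuousLinearMap.id 𝕜 X - c).domRestrict M) := by
  set u := ContinuousLinearMap.id 𝕜 X - c
  rw [antilipschitzWith_iff_exists_mul_le_norm]
  by_contra! hsmall
  have hunit : ∀ n : ℕ, ∃ y ∈ M, ‖y‖ = 1 ∧ ‖u y‖ < 1 / (n + 1) := by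
    intro n
    obtain ⟨m, hm⟩ := hsmall (1 / (n + 1)) (by positivity)
    have hm0 : (m : X) ≠ 0 := fun h => by simp [h] at hm
    refine ⟨(‖(m : X)‖⁻¹ : 𝕜) • (m : X), M.smul_mem _ m.2, norm_smul_inv_norm hm0, ?_⟩
    have hpos : 0 < ‖(m : X)‖ := norm_pos_iff.mpr hm0
    rw [map_smul, norm_smul, norm_inv, RCLike.norm_ofReal, abs_norm, inv_mul_lt_iff₀ hpos,
      mul_comm]
    exact hm
  choose y hyM hy1 hyu using hunit
  obtain ⟨K, hK, hKc⟩ := hc.image_closedBall_subset_compact (1 : ℝ)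
  obtain ⟨a, -, φ, hφ, hca⟩ := hK.tendsto_subseq (x := fun n => c (y n))
    (fun n => hKc ⟨y n, by simp [hy1], rfl⟩)
  have hu0 : Tendsto (fun n => u (y (φ n))) atTop (𝓝 0) :=
    (squeeze_zero_norm (fun n => (hyu n).le) tendsto_one_div_add_atTop_nhds_zero_nat).comp
      hφ.tendsto_atTop
  -- `y = (id - c) y + c y` converges along `φ`, because both summands do
  have hya : Tendsto (fun n => y (φ n)) atTop (𝓝 a) := by
    simpa [u] using hu0.add hca
  have haM : a ∈ M := hM.mem_of_tendsto hya (Eventually.of_forall fun n => hyM _)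
  have haN : a ∈ u.ker := tendsto_nhds_unique ((u.continuous.tendsto a).comp hya) hu0
  have ha1 : ‖a‖ = 1 := tendsto_nhds_unique ((continuous_norm.tendsto a).comp hya)
    (by simp [Function.comp_def, hy1])
  have ha0 : a = 0 := (Submodule.mem_bot 𝕜).1 (hMN.le_bot ⟨haM, haN⟩)
  simp [ha0] at ha1

variable [CompleteSpace X]

theorem IsCompactOperator.isFredholm_id_sub (hc : IsCompactOperator c) :
    (ContinuousLinearMap.id 𝕜 X - c).IsFredholm := by
  set u := ContinuousLinearMap.id 𝕜 X - c
  have hker := hc.finiteDimensional_ker_id_sub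
  have hker_compl := Submodule.ClosedComplemented.of_finiteDimensional u.ker
  obtain ⟨M, hNM⟩ := hker_compl.exists_isTopCompl
  have hM : IsClosed (M : Set X) := hNM.isClosed'
  have : M.CoFG := (Submodule.FG.of_finite).cofg_of_isCompl hNM.isCompl
  have : CompleteSpace M := hM.completeSpace_coe
  obtain ⟨K, hK⟩ := hc.exists_antilipschitzWith_domRestrict_id_sub hM hNM.isCompl.disjoint.symm
  have hemb := hK.isClosedEmbedding (u.domRestrict M).uniformContinuous
  obtain ⟨hstrict, hrange⟩ := (u.isStrictMap_isClosed_range_iff_restrict M hM).2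
    ⟨hemb.isEmbedding.isStrictMap, by rw [LinearMap.coe_range]; exact hemb.isClosed_range⟩
  have : IsClosed (u.range : Set X) := hrange
  exact ⟨hstrict, hrange, hker, hc.finiteDimensional_quotient_range_id_sub, hker_compl⟩

end CompactPerturbationOfId

namespace InOperatorIdeal

variable {X₁ X₂ Y₁ Y₂ Z₁ Z₂ Z₃ Z₄ : Type*}
  [NormedAddCommGroup X₁] [NormedSpace ℂ X₁] [CompleteSpace X₁]
  [NormedAddCommGroup X₂] [NormedSpace ℂ X₂] [CompleteSpace X₂]
  [NormedAddCommGroup Y₁] [NormedSpace ℂ Y₁] [CompleteSpace Y₁]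
  [NormedAddCommGroup Y₂] [NormedSpace ℂ Y₂] [CompleteSpace Y₂]
  [NormedAddCommGroup Z₁] [NormedSpace ℂ Z₁] [CompleteSpace Z₁]
  [NormedAddCommGroup Z₂] [NormedSpace ℂ Z₂] [CompleteSpace Z₂]
  [NormedAddCommGroup Z₃] [NormedSpace ℂ Z₃] [CompleteSpace Z₃]
  [NormedAddCommGroup Z₄] [NormedSpace ℂ Z₄] [CompleteSpace Z₄]
  {T : X₁ →L[ℂ] X₂} {S : Y₁ →L[ℂ] Y₂}

theorem comp_self_comp (R : X₂ →L[ℂ] Z₂) (R' : Z₁ →L[ℂ] X₁) :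
    InOperatorIdeal X₁ X₂ T Z₁ Z₂ (R ∘L T ∘L R') :=
  ⟨1, fun _ => R, fun _ => R', by simp⟩

theorem zero : InOperatorIdeal X₁ X₂ T Z₁ Z₂ 0 :=
  ⟨0, Fin.elim0, Fin.elim0, by simp⟩

theorem add {W V : Z₁ →L[ℂ] Z₂} (hW : InOperatorIdeal X₁ X₂ T Z₁ Z₂ W)
    (hV : InOperatorIdeal X₁ X₂ T Z₁ Z₂ V) : InOperatorIdeal X₁ X₂ T Z₁ Z₂ (W + V) := by
  obtain ⟨n, R, R', rfl⟩ := hW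
  obtain ⟨m, P, P', rfl⟩ := hV
  refine ⟨n + m, Fin.addCases R P, Fin.addCases R' P', ?_⟩
  simp [Fin.sum_univ_add]

theorem sum {ι : Type*} (s : Finset ι) {W : ι → Z₁ →L[ℂ] Z₂}
    (h : ∀ i ∈ s, InOperatorIdeal X₁ X₂ T Z₁ Z₂ (W i)) :
    InOperatorIdeal X₁ X₂ T Z₁ Z₂ (∑ i ∈ s, W i) :=
  Finset.sum_induction W _ (fun _ _ => add) zero h

theorem comp {W : Z₁ →L[ℂ] Z₂} (hW : InOperatorIdeal X₁ X₂ T Z₁ Z₂ W)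
    (P : Z₂ →L[ℂ] Z₃) (Q : Z₄ →L[ℂ] Z₁) : InOperatorIdeal X₁ X₂ T Z₄ Z₃ (P ∘L W ∘L Q) := by
  obtain ⟨n, R, R', rfl⟩ := hW
  refine ⟨n, fun j => P ∘L R j, fun j => R' j ∘L Q, ?_⟩
  ext z
  simp [map_sum]

theorem trans {W : Z₁ →L[ℂ] Z₂} (hW : InOperatorIdeal X₁ X₂ T Z₁ Z₂ W)
    (hT : InOperatorIdeal Y₁ Y₂ S X₁ X₂ T) : InOperatorIdeal Y₁ Y₂ S Z₁ Z₂ W := by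
  obtain ⟨n, R, R', rfl⟩ := hW
  exact sum _ fun j _ => hT.comp (R j) (R' j)

theorem smulRight (hT0 : T ≠ 0) (φ : Z₁ →L[ℂ] ℂ) (z : Z₂) :
    InOperatorIdeal X₁ X₂ T Z₁ Z₂ (φ.smulRight z) := by
  obtain ⟨x, hx⟩ : ∃ x, T x ≠ 0 := by
    by_contra! h
    exact hT0 (ext h)
  obtain ⟨ψ, hψ⟩ := SeparatingDual.exists_eq_one (R := ℂ) hx
  convert comp_self_comp (T := T) (ψ.smulRight z) (φ.smulRight x) using 1
  ext w
  simp [hψ]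

theorem of_hasFiniteRange (hT0 : T ≠ 0) {W : Z₁ →L[ℂ] Z₂}
    (hW : (W : Z₁ →ₗ[ℂ] Z₂).HasFiniteRange) : InOperatorIdeal X₁ X₂ T Z₁ Z₂ W := by
  set V := (W : Z₁ →ₗ[ℂ] Z₂).range
  have : FiniteDimensional ℂ V := Module.Finite.iff_fg.mpr hW
  let b := Module.finBasis ℂ V
  let W' : Z₁ →L[ℂ] V := W.codRestrict V (LinearMap.mem_range_self _)
  have hsum :
      W = ∑ i, (LinearMap.toContinuousLinearMap (b.coord i) ∘L W').smulRight (b i : Z₂) := by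
    ext z
    simp only [sum_apply, smulRight_apply, comp_apply, LinearMap.coe_toContinuousLinearMap',
      Module.Basis.coord_apply]
    have h := congrArg Subtype.val (b.sum_repr (W' z)).symm
    push_cast at h
    exact h
  rw [hsum]
  exact sum _ fun i _ => smulRight hT0 _ _

theorem of_comp_id_sub {c : X₁ →L[ℂ] X₁} (hS0 : S ≠ 0) (hc : IsCompactOperator c)
    (h : InOperatorIdeal Y₁ Y₂ S X₁ X₂ (T ∘L (ContinuousLinearMap.id ℂ X₁ - c))) :
    InOperatorIdeal Y₁ Y₂ S X₁ X₂ T := by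
  set u := ContinuousLinearMap.id ℂ X₁ - c
  obtain ⟨v, -, huv⟩ := hc.isFredholm_id_sub.exists_isQuasiInverse
  set k := ContinuousLinearMap.id ℂ X₁ - u ∘L v
  have hk : (k : X₁ →ₗ[ℂ] X₁).HasFiniteRange := by
    have := (LinearMap.FiniteRangeSetoid.equiv_iff_hasFiniteRange.mp huv).neg
    rw [neg_sub] at this
    exact this
  have hT : T = (T ∘L u) ∘L v + T ∘L k := by
    simp only [k, comp_sub, comp_id, comp_assoc]
    abel
  have hTuv : InOperatorIdeal Y₁ Y₂ S X₁ X₂ ((T ∘L u) ∘L v) := by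
    simpa using h.comp (ContinuousLinearMap.id ℂ X₂) v
  rw [hT]
  exact hTuv.add (of_hasFiniteRange hS0 (hk.comp_left (T : X₁ →ₗ[ℂ] X₂)))

end InOperatorIdeal

section EquivalentAfterExtension

variable {𝕜 : Type*} [NontriviallyNormedField 𝕜] {X₁ X₂ Y₁ Y₂ : Type*}
  [NormedAddCommGroup X₁] [NormedSpace 𝕜 X₁] [NormedAddCommGroup X₂] [NormedSpace 𝕜 X₂]
  [NormedAddCommGroup Y₁] [NormedSpace 𝕜 Y₁] [NormedAddCommGroup Y₂] [NormedSpace 𝕜 Y₂]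
  {T : X₁ →L[𝕜] X₂} {S : Y₁ →L[𝕜] Y₂}
  {Z W : Type*} [NormedAddCommGroup Z] [NormedSpace 𝕜 Z] [NormedAddCommGroup W] [NormedSpace 𝕜 W]

variable (T S Z W) in
def EquivalentAfterExtension : Prop :=
  ∃ (E : (Y₂ × W) ≃L[𝕜] (X₂ × Z)) (F : (X₁ × Z) ≃L[𝕜] (Y₁ × W)),
    T.prodMap (ContinuousLinearMap.id 𝕜 Z) =
      (E : (Y₂ × W) →L[𝕜] (X₂ × Z)) ∘L S.prodMap (ContinuousLinearMap.id 𝕜 W) ∘L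
        (F : (X₁ × Z) →L[𝕜] (Y₁ × W))

theorem EquivalentAfterExtension.symm (h : EquivalentAfterExtension T S Z W) :
    EquivalentAfterExtension S T W Z := by
  obtain ⟨E, F, hEF⟩ := h
  refine ⟨E.symm, F.symm, ?_⟩
  ext p <;> simp [hEF]

theorem EquivalentAfterExtension.exists_comp_id_sub_eq (h : EquivalentAfterExtension T S Z W) :
    ∃ (B : X₂ →L[𝕜] X₁) (R : Y₂ →L[𝕜] X₂) (R' : X₁ →L[𝕜] Y₁),
      T ∘L (ContinuousLinearMap.id 𝕜 X₁ - B ∘L T) = R ∘L S ∘L R' := by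
  obtain ⟨E, F, hEF⟩ := h
  have hpt : ∀ p : X₁ × Z, (T p.1, p.2) = E (S (F p).1, (F p).2) := fun p => by
    simpa [Prod.map] using congr($hEF p)
  set A : W →L[𝕜] X₁ := fst 𝕜 X₁ Z ∘L (F.symm : (Y₁ × W) →L[𝕜] (X₁ × Z)) ∘L inr 𝕜 Y₁ W
  set G : X₂ →L[𝕜] W := snd 𝕜 Y₂ W ∘L (E.symm : (X₂ × Z) →L[𝕜] (Y₂ × W)) ∘L inl 𝕜 X₂ Z
  have hE : ∀ w, (E (0, w)).1 = T (A w) := fun w => by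
    simpa [A] using congr(Prod.fst $(hpt (F.symm (0, w)))).symm
  have hF : ∀ x, (F (x, 0)).2 = G (T x) := fun x => by
    simpa [G] using congr((E.symm $(hpt (x, 0))).2).symm
  refine ⟨A ∘L G, fst 𝕜 X₂ Z ∘L (E : (Y₂ × W) →L[𝕜] (X₂ × Z)) ∘L inl 𝕜 Y₂ W,
    fst 𝕜 Y₁ W ∘L (F : (X₁ × Z) →L[𝕜] (Y₁ × W)) ∘L inl 𝕜 X₁ Z, ?_⟩
  ext x
  have hsplit : (S (F (x, 0)).1, (F (x, 0)).2) = (S (F (x, 0)).1, 0) + (0, (F (x, 0)).2) := by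
    simp
  have := congr(Prod.fst $(hpt (x, 0)))
  rw [hsplit, map_add, Prod.fst_add, hE, hF] at this
  simpa using sub_eq_of_eq_add this

end EquivalentAfterExtension

theorem EquivalentAfterExtension.inOperatorIdeal {X₁ X₂ Y₁ Y₂ Z W : Type*}
    [NormedAddCommGroup X₁] [NormedSpace ℂ X₁] [CompleteSpace X₁]
    [NormedAddCommGroup X₂] [NormedSpace ℂ X₂] [CompleteSpace X₂]
    [NormedAddCommGroup Y₁] [NormedSpace ℂ Y₁] [CompleteSpace Y₁]
    [NormedAddCommGroup Y₂] [NormedSpace ℂ Y₂] [CompleteSpace Y₂]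
    [NormedAddCommGroup Z] [NormedSpace ℂ Z] [NormedAddCommGroup W] [NormedSpace ℂ W]
    {T : X₁ →L[ℂ] X₂} {S : Y₁ →L[ℂ] Y₂} (h : EquivalentAfterExtension T S Z W)
    (hT : IsCompactOperator T) (hS0 : S ≠ 0) : InOperatorIdeal Y₁ Y₂ S X₁ X₂ T := by
  obtain ⟨B, R, R', hBRR⟩ := h.exists_comp_id_sub_eq
  have hBT : IsCompactOperator (B ∘L T) := hT.clm_comp B
  refine .of_comp_id_sub hS0 hBT ?_
  rw [hBRR]
  exact .comp_self_comp R R'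

/-- Nonzero compact operators that are equivalent after extension
generate the same operator ideal. -/
theorem operator_ideal_eq_of_equivalent_after_extension
    (X Y : Type*) [NormedAddCommGroup X] [NormedSpace ℂ X] [CompleteSpace X]
    [NormedAddCommGroup Y] [NormedSpace ℂ Y] [CompleteSpace Y]
    (T : X →L[ℂ] X) (S : Y →L[ℂ] Y) (hT0 : T ≠ 0) (hS0 : S ≠ 0)
    (hT : IsCompactOperator T) (hS : IsCompactOperator S)
    (hEAE : ∃ (E : (Y × X) ≃L[ℂ] (X × Y)) (F : (X × Y) ≃L[ℂ] (Y × X)),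
      T.prodMap (ContinuousLinearMap.id ℂ Y) =
        (E : (Y × X) →L[ℂ] (X × Y)) ∘L
          (S.prodMap (ContinuousLinearMap.id ℂ X)) ∘L
            (F : (X × Y) →L[ℂ] (Y × X))) :
    ∀ (Z₁ Z₂ : Type*) [NormedAddCommGroup Z₁] [NormedSpace ℂ Z₁] [CompleteSpace Z₁]
      [NormedAddCommGroup Z₂] [NormedSpace ℂ Z₂] [CompleteSpace Z₂]
      (W : Z₁ →L[ℂ] Z₂),
      InOperatorIdeal X X T Z₁ Z₂ W ↔ InOperatorIdeal Y Y S Z₁ Z₂ W := by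
  have hEAE : EquivalentAfterExtension T S Y X := hEAE
  have hTS := hEAE.inOperatorIdeal hT hS0
  have hST := hEAE.symm.inOperatorIdeal hS hT0
  intro Z₁ Z₂ _ _ _ _ _ _ W
  exact ⟨fun hW => hW.trans hTS, fun hW => hW.trans hST⟩
end

section
/- If A ∈ B(ℓ^q, ℓᵖ) and G ∈ B(ℓᵖ, ℓ^q) with 1 ≤ p ≠ q < ∞ satisfy G A = id on ℓ^q, then a contradiction results; i.e., the identity on ℓ^q does not factor through ℓᵖ via bounded operators when p ≠ q. -/
/-!
Gliding hump. A subsequence of the images `A e_n` of the unit vectors converges coordinatewise,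
so for `d_k = e_{φ(2k+1)} - e_{φ(2k)}` the vectors `A d_k` tend to `0` coordinatewise, while
`G A = id` keeps them away from `0`. A further subsequence of `A d_k` is then a summable
perturbation of a disjointly supported sequence. For disjointly supported vectors of `ℓʳ` the
`r`-th powers of norms add, so `‖∑_{k<K} d_{m k}‖ ≍ K^{1/q}` in `ℓ^q` and
`‖∑_{k<K} A d_{m k}‖ ≍ K^{1/p}` in `ℓᵖ`. Boundedness of `A` and `G` compares these two rates in
both directions, forcing `1/p = 1/q`.
-/

open Filter Finset Asymptotics Topology
open scoped ENNReal
open scoped Function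

theorem isTheta_sum_range_natCast {f : ℕ → ℝ} {a b : ℝ} (ha : 0 < a) (hlow : ∀ k, a ≤ f k)
    (hup : ∀ k, f k ≤ b) :
    (fun K => ∑ k ∈ range K, f k) =Θ[atTop] fun K : ℕ => (K : ℝ) := by
  have hsum_low (K : ℕ) : K * a ≤ ∑ k ∈ range K, f k := by
    simpa using card_nsmul_le_sum (range K) f a fun k _ => hlow k
  have hsum_up (K : ℕ) : ∑ k ∈ range K, f k ≤ K * b := by
    simpa using sum_le_card_nsmul (range K) f b fun k _ => hup k
  have hsum_nonneg (K : ℕ) : 0 ≤ ∑ k ∈ range K, f k :=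
    sum_nonneg fun k _ => ha.le.trans (hlow k)
  refine ⟨.of_bound b (.of_forall fun K => ?_), .of_bound a⁻¹ (.of_forall fun K => ?_)⟩
  · rw [Real.norm_of_nonneg (hsum_nonneg K), Real.norm_of_nonneg K.cast_nonneg, mul_comm]
    exact hsum_up K
  · rw [Real.norm_of_nonneg (hsum_nonneg K), Real.norm_of_nonneg K.cast_nonneg,
      le_inv_mul_iff₀ ha, mul_comm]
    exact hsum_low K

theorem le_of_isBigO_natCast_rpow {a b : ℝ}
    (h : (fun n : ℕ => (n : ℝ) ^ a) =O[atTop] fun n => (n : ℝ) ^ b) : a ≤ b := by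
  by_contra! hba
  have hpos : ∀ᶠ n : ℕ in atTop, (0 : ℝ) < n :=
    (eventually_gt_atTop 0).mono fun n hn => Nat.cast_pos.2 hn
  have hlo : (fun n : ℕ => (n : ℝ) ^ b) =o[atTop] fun n => (n : ℝ) ^ a := by
    refine (isLittleO_iff_tendsto' (hpos.mono fun n hn h0 => ?_)).2 ?_
    · exact absurd h0 (Real.rpow_pos_of_pos hn a).ne'
    · refine ((tendsto_rpow_neg_atTop (sub_pos.2 hba)).comp tendsto_natCast_atTop_atTop).congr'
        (hpos.mono fun n hn => ?_)
      simp only [Function.comp_apply, neg_sub, Real.rpow_sub hn]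
  exact isLittleO_irrefl (hpos.frequently.mono fun n hn => (Real.rpow_pos_of_pos hn a).ne')
    (h.trans_isLittleO hlo)

theorem Asymptotics.IsTheta.sum_range_of_summable_norm_sub {E : Type*} [NormedAddCommGroup E]
    {v w : ℕ → E} {r : ℝ} (hr : 0 < r)
    (hv : (fun K => ∑ k ∈ range K, v k) =Θ[atTop] fun K : ℕ => (K : ℝ) ^ r)
    (hwv : Summable fun k => ‖w k - v k‖) :
    (fun K => ∑ k ∈ range K, w k) =Θ[atTop] fun K : ℕ => (K : ℝ) ^ r := by
  have hbdd : (fun K => ∑ k ∈ range K, (w k - v k)) =O[atTop] fun _ => (1 : ℝ) :=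
    .of_bound (∑' k, ‖w k - v k‖) (.of_forall fun K => by
      simpa using (norm_sum_le _ _).trans (hwv.sum_le_tsum _ fun k _ => norm_nonneg _))
  have hone : (fun _ : ℕ => (1 : ℝ)) =o[atTop] fun K : ℕ => (K : ℝ) ^ r :=
    (isLittleO_one_left_iff ℝ).2
      (tendsto_abs_atTop_atTop.comp ((tendsto_rpow_atTop hr).comp tendsto_natCast_atTop_atTop))
  have hsplit : (fun K => ∑ k ∈ range K, w k) =
      (fun K => ∑ k ∈ range K, v k) + fun K => ∑ k ∈ range K, (w k - v k) := by
    ext K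
    simp only [Pi.add_apply, sum_sub_distrib, add_sub_cancel]
  rw [hsplit]
  exact hv.add_isLittleO (hbdd.trans_isLittleO hone)

theorem Filter.Tendsto.sub_comp_two_mul {G : Type*} [AddGroup G] [TopologicalSpace G]
    [IsTopologicalAddGroup G] {f : ℕ → G} {x : G} (hf : Tendsto f atTop (𝓝 x)) :
    Tendsto (fun k => f (2 * k + 1) - f (2 * k)) atTop (𝓝 0) := by
  have hodd : StrictMono fun k : ℕ => 2 * k + 1 := fun a b h =>
    show 2 * a + 1 < 2 * b + 1 by omega
  have heven : StrictMono fun k : ℕ => 2 * k := fun a b h => show 2 * a < 2 * b by omega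
  simpa using (hf.comp hodd.tendsto_atTop).sub (hf.comp heven.tendsto_atTop)

namespace lp

section Disjoint

variable {α E : Type*} [NormedAddCommGroup E] {p : ℝ≥0∞}

theorem norm_add_rpow_of_disjoint (hp : 0 < p.toReal) {f g : lp (fun _ : α => E) p}
    (hfg : Disjoint (Function.support ⇑f) (Function.support ⇑g)) :
    ‖f + g‖ ^ p.toReal = ‖f‖ ^ p.toReal + ‖g‖ ^ p.toReal := by
  have hpoint : ∀ i, ‖f i + g i‖ ^ p.toReal = ‖f i‖ ^ p.toReal + ‖g i‖ ^ p.toReal := by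
    intro i
    by_cases hfi : f i = 0
    · simp [hfi, Real.zero_rpow hp.ne']
    · have hgi : g i = 0 := Function.notMem_support.1 (Set.disjoint_left.1 hfg hfi)
      simp [hgi, Real.zero_rpow hp.ne']
  simp only [norm_rpow_eq_tsum hp, coeFn_add, Pi.add_apply, hpoint]
  exact ((lp.memℓp f).summable hp).tsum_add ((lp.memℓp g).summable hp)

theorem support_sum_subset {ι : Type*} (s : Finset ι) (f : ι → lp (fun _ : α => E) p) :
    Function.support ⇑(∑ k ∈ s, f k) ⊆ ⋃ k ∈ s, Function.support ⇑(f k) := by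
  intro j hj
  rw [Function.mem_support, coeFn_sum, Finset.sum_apply] at hj
  obtain ⟨k, hk, hkj⟩ := Finset.exists_ne_zero_of_sum_ne_zero hj
  exact Set.mem_biUnion hk hkj

theorem norm_sum_rpow_of_pairwiseDisjoint {ι : Type*} (hp : 0 < p.toReal) {s : Finset ι}
    {f : ι → lp (fun _ : α => E) p}
    (hf : (s : Set ι).PairwiseDisjoint fun k => Function.support ⇑(f k)) :
    ‖∑ k ∈ s, f k‖ ^ p.toReal = ∑ k ∈ s, ‖f k‖ ^ p.toReal := by
  classical
  induction s using Finset.induction_on with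
  | empty => simp [Real.zero_rpow hp.ne']
  | insert a s ha ih =>
    rw [coe_insert] at hf
    rw [sum_insert ha, sum_insert ha, norm_add_rpow_of_disjoint hp, ih (hf.subset (by simp))]
    refine Disjoint.mono_right (support_sum_subset s f) ?_
    simp only [Set.disjoint_iUnion_right]
    exact fun k hk => hf (by simp) (by simp [hk]) (ne_of_mem_of_not_mem hk ha).symm

theorem support_sum_single_subset [DecidableEq α] (s : Finset α) (f : α → E) :
    Function.support ⇑(∑ i ∈ s, lp.single p i (f i)) ⊆ s := by
  intro j hj
  by_contra hjs
  simp only [Function.mem_support, coeFn_sum, Finset.sum_apply, lp.coeFn_single,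
    Finset.sum_pi_single] at hj
  exact hj (if_neg hjs)

theorem isTheta_sum_range_of_pairwiseDisjoint [Fact (1 ≤ p)] (hp : p ≠ ∞)
    {x : ℕ → lp (fun _ : α => E) p}
    (hx : Pairwise (Disjoint on fun k => Function.support ⇑(x k))) {a b : ℝ} (ha : 0 < a)
    (hlow : ∀ k, a ≤ ‖x k‖) (hup : ∀ k, ‖x k‖ ≤ b) :
    (fun K => ∑ k ∈ range K, x k) =Θ[atTop] fun K : ℕ => (K : ℝ) ^ p.toReal⁻¹ := by
  have hp' : 0 < p.toReal := ENNReal.toReal_pos (zero_lt_one.trans_le Fact.out).ne' hp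
  have hpow : (fun K => ∑ k ∈ range K, ‖x k‖ ^ p.toReal) =Θ[atTop] fun K : ℕ => (K : ℝ) :=
    isTheta_sum_range_natCast (Real.rpow_pos_of_pos ha _)
      (fun k => Real.rpow_le_rpow ha.le (hlow k) hp'.le)
      (fun k => Real.rpow_le_rpow (norm_nonneg' _) (hup k) hp'.le)
  refine isTheta_norm_left.1 (EventuallyEq.trans_isTheta (.of_forall fun K => ?_)
    (hpow.rpow (.of_forall fun K => sum_nonneg fun k _ => Real.rpow_nonneg (norm_nonneg' _) _)
      (.of_forall fun K => K.cast_nonneg)))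
  rw [← norm_sum_rpow_of_pairwiseDisjoint hp' (hx.set_pairwise _),
    Real.rpow_rpow_inv (norm_nonneg' _) hp'.ne']

end Disjoint

theorem exists_strictMono_tendsto_apply {α E : Type*} [Countable α] [NormedAddCommGroup E]
    [ProperSpace E] {p : ℝ≥0∞} (hp : p ≠ 0) {u : ℕ → lp (fun _ : α => E) p} {C : ℝ}
    (hu : ∀ n, ‖u n‖ ≤ C) :
    ∃ φ : ℕ → ℕ, StrictMono φ ∧
      ∃ L : α → E, ∀ i, Tendsto (fun n => u (φ n) i) atTop (𝓝 (L i)) := by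
  have hmem (n : ℕ) : ⇑(u n) ∈ Set.univ.pi fun _ : α => Metric.closedBall (0 : E) C :=
    Set.mem_univ_pi.2 fun i =>
      mem_closedBall_zero_iff.2 ((norm_apply_le_norm hp _ i).trans (hu n))
  obtain ⟨L, -, φ, hφ, hL⟩ :=
    (isCompact_univ_pi fun _ => isCompact_closedBall (0 : E) C).tendsto_subseq hmem
  exact ⟨φ, hφ, L, fun i => tendsto_pi_nhds.1 hL i⟩

section GlidingHump

variable {E : Type*} [NormedAddCommGroup E] {p : ℝ≥0∞}

theorem exists_gt_disjoint_norm_sub_sum_single_le (hp : 0 < p.toReal)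
    {w : ℕ → lp (fun _ : ℕ => E) p} (hw : ∀ i, Tendsto (fun n => w n i) atTop (𝓝 0))
    (N : ℕ) (U : Finset ℕ) {ε : ℝ} (hε : 0 < ε) :
    ∃ n > N, ∃ S : Finset ℕ, Disjoint S U ∧ ‖w n - ∑ i ∈ S, lp.single p i (w n i)‖ ≤ ε := by
  have hη : 0 < ε ^ p.toReal / 2 := by positivity
  have hU : Tendsto (fun n => ∑ i ∈ U, ‖w n i‖ ^ p.toReal) atTop (𝓝 0) := by
    simpa [Real.zero_rpow hp.ne'] using
      tendsto_finsetSum U fun i _ => (hw i).norm.rpow_const (Or.inr hp.le)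
  obtain ⟨n, hNn, hn⟩ :=
    ((eventually_gt_atTop N).and (hU.eventually (eventually_lt_nhds hη))).exists
  obtain ⟨S, hS⟩ :=
    ((hasSum_norm hp (w n)).eventually (eventually_gt_nhds (sub_lt_self _ hη))).exists
  refine ⟨n, hNn, S \ U, sdiff_disjoint, ?_⟩
  have hsplit : ∑ i ∈ S, ‖w n i‖ ^ p.toReal ≤
      ∑ i ∈ U, ‖w n i‖ ^ p.toReal + ∑ i ∈ S \ U, ‖w n i‖ ^ p.toReal := by
    rw [← sum_inter_add_sum_sdiff S U]
    gcongr
    · exact inter_subset_right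
  refine (Real.rpow_le_rpow_iff (norm_nonneg' _) hε.le hp).1 ?_
  rw [lp.norm_compl_sum_single hp]
  linarith

theorem exists_strictMono_pairwiseDisjoint_approx (hp : 0 < p.toReal)
    {w : ℕ → lp (fun _ : ℕ => E) p} (hw : ∀ i, Tendsto (fun n => w n i) atTop (𝓝 0))
    {δ : ℝ} (hδ : 0 < δ) :
    ∃ m : ℕ → ℕ, StrictMono m ∧ ∃ v : ℕ → lp (fun _ : ℕ => E) p,
      Pairwise (Disjoint on fun k => Function.support ⇑(v k)) ∧
      ∀ k, ‖w (m k) - v k‖ ≤ δ * (1 / 2) ^ k := by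
  classical
  -- In a step `(j, n, S)` the precision `δ / 2 ^ j` is fixed before `n` is chosen.
  obtain ⟨f, hfδ, hf⟩ := exists_seq_of_forall_finset_exists
    (fun x : ℕ × ℕ × Finset ℕ =>
      ‖w x.2.1 - ∑ i ∈ x.2.2, lp.single p i (w x.2.1 i)‖ ≤ δ * (1 / 2) ^ x.1)
    (fun x y => x.1 < y.1 ∧ x.2.1 < y.2.1 ∧ Disjoint x.2.2 y.2.2) fun s _ => by
      obtain ⟨n, hn, S, hS, hwS⟩ := exists_gt_disjoint_norm_sub_sum_single_le hp hw
        (s.sup fun x => x.2.1) (s.biUnion fun x => x.2.2)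
        (by positivity : 0 < δ * (1 / 2) ^ (s.sup Prod.fst + 1))
      exact ⟨(_, n, S), hwS, fun x hx => ⟨Nat.lt_succ_of_le (le_sup hx),
        (le_sup (f := fun x => x.2.1) hx).trans_lt hn,
        (hS.mono_right (subset_biUnion_of_mem (fun x => x.2.2) hx)).symm⟩⟩
  have hlevel : StrictMono fun k => (f k).1 := fun k l hkl => (hf k l hkl).1
  refine ⟨fun k => (f k).2.1, fun k l hkl => (hf k l hkl).2.1,
    fun k => ∑ i ∈ (f k).2.2, lp.single p i (w (f k).2.1 i), ?_, fun k => (hfδ k).trans ?_⟩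
  · refine (pairwise_disjoint_on _).2 fun k l hkl => ?_
    exact (Finset.disjoint_coe.2 (hf k l hkl).2.2).mono
      (support_sum_single_subset _ _) (support_sum_single_subset _ _)
  · gcongr δ * ?_
    exact pow_le_pow_of_le_one (by norm_num) (by norm_num) (hlevel.id_le k)

theorem exists_strictMono_isTheta_sum_range [Fact (1 ≤ p)] (hp : p ≠ ∞)
    {w : ℕ → lp (fun _ : ℕ => E) p} (hw : ∀ i, Tendsto (fun n => w n i) atTop (𝓝 0))
    {a b : ℝ} (ha : 0 < a) (hlow : ∀ k, a ≤ ‖w k‖) (hup : ∀ k, ‖w k‖ ≤ b) :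
    ∃ m : ℕ → ℕ, StrictMono m ∧
      (fun K => ∑ k ∈ range K, w (m k)) =Θ[atTop] fun K : ℕ => (K : ℝ) ^ p.toReal⁻¹ := by
  have hp' : 0 < p.toReal := ENNReal.toReal_pos (zero_lt_one.trans_le Fact.out).ne' hp
  obtain ⟨m, hm, v, hv, hwv⟩ := exists_strictMono_pairwiseDisjoint_approx hp' hw (half_pos ha)
  have hwv_le (k : ℕ) : ‖w (m k) - v k‖ ≤ a / 2 :=
    (hwv k).trans
      (mul_le_of_le_one_right (half_pos ha).le (pow_le_one₀ (by norm_num) (by norm_num)))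
  have hv_low (k : ℕ) : a / 2 ≤ ‖v k‖ := by
    linarith [norm_sub_norm_le (w (m k)) (v k), hlow (m k), hwv_le k]
  have hv_up (k : ℕ) : ‖v k‖ ≤ b + a / 2 := by
    linarith [norm_sub_norm_le (v k) (w (m k)), norm_sub_rev (v k) (w (m k)), hup (m k),
      hwv_le k]
  refine ⟨m, hm, IsTheta.sum_range_of_summable_norm_sub (inv_pos.2 hp')
    (isTheta_sum_range_of_pairwiseDisjoint hp hv (half_pos ha) hv_low hv_up) ?_⟩
  exact (summable_geometric_two.mul_left _).of_nonneg_of_le (fun k => norm_nonneg _) hwv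

end GlidingHump

section PairDiff

variable {𝕜 : Type*} [NormedField 𝕜] {q : ℝ≥0∞} {φ : ℕ → ℕ}

noncomputable def pairDiff (q : ℝ≥0∞) (φ : ℕ → ℕ) (k : ℕ) : lp (fun _ : ℕ => 𝕜) q :=
  lp.single q (φ (2 * k + 1)) 1 - lp.single q (φ (2 * k)) 1

theorem pairwise_disjoint_support_pairDiff (hφ : StrictMono φ) :
    Pairwise (Disjoint on fun k => Function.support ⇑(pairDiff (𝕜 := 𝕜) q φ k)) := by
  have hsupp (k : ℕ) :
      Function.support ⇑(pairDiff (𝕜 := 𝕜) q φ k) ⊆ {φ (2 * k + 1), φ (2 * k)} := by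
    refine Function.support_subset_iff'.2 fun i hi => ?_
    simp only [Set.mem_insert_iff, Set.mem_singleton_iff, not_or] at hi
    simp [pairDiff, hi.1, hi.2]
  refine (pairwise_disjoint_on _).2 fun k l hkl => ?_
  refine Set.disjoint_of_subset (hsupp k) (hsupp l) ?_
  simp only [Set.disjoint_insert_left, Set.disjoint_insert_right, Set.disjoint_singleton,
    Set.mem_insert_iff, Set.mem_singleton_iff, ne_eq, hφ.injective.eq_iff]
  omega

theorem one_le_norm_pairDiff (hq : q ≠ 0) (hφ : StrictMono φ) (k : ℕ) :
    1 ≤ ‖pairDiff (𝕜 := 𝕜) q φ k‖ := by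
  have hne : φ (2 * k) ≠ φ (2 * k + 1) := (hφ (by omega : 2 * k < 2 * k + 1)).ne
  simpa [pairDiff, Pi.single_eq_of_ne' hne] using
    norm_apply_le_norm hq (pairDiff (𝕜 := 𝕜) q φ k) (φ (2 * k + 1))

theorem norm_pairDiff_le [Fact (1 ≤ q)] (k : ℕ) :
    ‖pairDiff (𝕜 := 𝕜) q φ k‖ ≤ 2 := by
  have hq : 0 < q := zero_lt_one.trans_le Fact.out
  have hsingle (i : ℕ) : ‖lp.single (E := fun _ : ℕ => 𝕜) q i 1‖ = 1 := by
    rw [lp.norm_single hq, norm_one]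
  calc ‖pairDiff (𝕜 := 𝕜) q φ k‖
      ≤ ‖lp.single (E := fun _ : ℕ => 𝕜) q (φ (2 * k + 1)) 1‖ +
        ‖lp.single (E := fun _ : ℕ => 𝕜) q (φ (2 * k)) 1‖ := norm_sub_le _ _
    _ = 2 := by rw [hsingle, hsingle]; norm_num

theorem isTheta_sum_range_pairDiff [Fact (1 ≤ q)] (hq : q ≠ ∞) (hφ : StrictMono φ)
    {m : ℕ → ℕ} (hm : Function.Injective m) :
    (fun K => ∑ k ∈ range K, pairDiff (𝕜 := 𝕜) q φ (m k)) =Θ[atTop]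
      fun K : ℕ => (K : ℝ) ^ q.toReal⁻¹ :=
  isTheta_sum_range_of_pairwiseDisjoint hq
    ((pairwise_disjoint_support_pairDiff hφ).comp_of_injective hm) one_pos
    (fun k => one_le_norm_pairDiff (zero_lt_one.trans_le Fact.out).ne' hφ (m k))
    (fun k => norm_pairDiff_le (m k))

end PairDiff

theorem exists_strictMono_tendsto_apply_map_pairDiff {𝕜 E : Type*} [NontriviallyNormedField 𝕜]
    [NormedAddCommGroup E] [NormedSpace 𝕜 E] [ProperSpace E] {p q : ℝ≥0∞} [Fact (1 ≤ p)]
    [Fact (1 ≤ q)]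
    (T : lp (fun _ : ℕ => 𝕜) q →L[𝕜] lp (fun _ : ℕ => E) p) :
    ∃ φ : ℕ → ℕ, StrictMono φ ∧ ∀ i, Tendsto (fun k => T (pairDiff q φ k) i) atTop (𝓝 0) := by
  have hq : 0 < q := zero_lt_one.trans_le Fact.out
  obtain ⟨φ, hφ, L, hL⟩ := exists_strictMono_tendsto_apply (zero_lt_one.trans_le Fact.out).ne'
    (u := fun n => T (lp.single (E := fun _ : ℕ => 𝕜) q n 1)) (C := ‖T‖) fun n =>
      (T.le_opNorm _).trans (by rw [lp.norm_single hq, norm_one, mul_one])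
  refine ⟨φ, hφ, fun i => ((hL i).sub_comp_two_mul).congr fun k => ?_⟩
  simp [pairDiff, map_sub]

end lp

/-- For `1 ≤ p ≠ q < ∞`, the identity on `ℓ^q` does not factor through
`ℓᵖ`: there are no bounded operators `A : ℓ^q → ℓᵖ` and `G : ℓᵖ → ℓ^q` with `G A = id`. -/
theorem no_factorization_of_id_through_lp
    (p q : ℝ≥0∞) [Fact (1 ≤ p)] [Fact (1 ≤ q)] (hp : p < ⊤) (hq : q < ⊤) (hpq : p ≠ q)
    (A : lp (fun _ : ℕ => ℂ) q →L[ℂ] lp (fun _ : ℕ => ℂ) p)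
    (G : lp (fun _ : ℕ => ℂ) p →L[ℂ] lp (fun _ : ℕ => ℂ) q)
    (h : G ∘L A = ContinuousLinearMap.id ℂ (lp (fun _ : ℕ => ℂ) q)) :
    False := by
  have hGA (x : lp (fun _ : ℕ => ℂ) q) : G (A x) = x := DFunLike.congr_fun h x
  obtain ⟨φ, hφ, hAd_null⟩ := lp.exists_strictMono_tendsto_apply_map_pairDiff A
  set d := lp.pairDiff (𝕜 := ℂ) q φ
  have hAd_low (k : ℕ) : 1 ≤ ‖G‖ * ‖A (d k)‖ :=
    (lp.one_le_norm_pairDiff (zero_lt_one.trans_le Fact.out).ne' hφ k).trans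
      (by simpa only [hGA] using G.le_opNorm (A (d k)))
  have hG : 0 < ‖G‖ := (norm_nonneg G).lt_of_ne fun h0 => absurd (hAd_low 0) (by simp [← h0])
  obtain ⟨m, hm, hAd⟩ := lp.exists_strictMono_isTheta_sum_range hp.ne hAd_null (inv_pos.2 hG)
    (fun k => (inv_le_iff_one_le_mul₀' hG).2 (hAd_low k))
    (fun k => (A.le_opNorm _).trans
      (mul_le_mul_of_nonneg_left (lp.norm_pairDiff_le k) (norm_nonneg A)))
  have hd := lp.isTheta_sum_range_pairDiff (𝕜 := ℂ) hq.ne hφ hm.injective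
  have hsumA : (fun K => ∑ k ∈ range K, A (d (m k))) =O[atTop]
      fun K => ∑ k ∈ range K, d (m k) := by
    simpa only [map_sum] using A.isBigO_comp (fun K => ∑ k ∈ range K, d (m k)) atTop
  have hsumG : (fun K => ∑ k ∈ range K, d (m k)) =O[atTop]
      fun K => ∑ k ∈ range K, A (d (m k)) := by
    simpa only [map_sum, hGA] using G.isBigO_comp (fun K => ∑ k ∈ range K, A (d (m k))) atTop
  have hpq_le := le_of_isBigO_natCast_rpow (hAd.symm.isBigO.trans (hsumA.trans hd.isBigO))
  have hqp_le := le_of_isBigO_natCast_rpow (hd.symm.isBigO.trans (hsumG.trans hAd.isBigO))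
  exact hpq ((ENNReal.toReal_eq_toReal_iff' hp.ne hq.ne).1
    (inv_inj.1 (le_antisymm hpq_le hqp_le)))
end

section
/- Let X and Y be Banach spaces with T ∈ B(X) and S ∈ B(Y) equivalent after extension, and suppose S is compact. If X is reflexive, then Y is reflexive. -/
open ContinuousLinearMap

/-- A normed space is reflexive if the canonical inclusion into its double dual is
surjective. -/
def IsReflexiveSpace (X : Type*) [NormedAddCommGroup X] [NormedSpace ℂ X] : Prop :=
  Function.Surjective (NormedSpace.inclusionInDoubleDual ℂ X)

/-!
Reading off the `Y`-component of `T ⊕ 1 = E (S ⊕ 1) F` at `(0, y)` gives `1 - K = A B` with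
`A : X → Y`, `B : Y → X` and `K` a compact operator on `Y` (a corner of `E` times `S` times a
corner of `F`). By Riesz theory `N = ker (1 - K)` is finite dimensional and `1 - K` is bounded
below on a closed complement `q` of `N`; then so is `B`, so `q` is isomorphic to a closed subspace
of `X` and hence reflexive. Finally `Y ≅ N × q` is reflexive.
-/

namespace ContinuousLinearMap

variable {𝕜 E F : Type*} [NontriviallyNormedField 𝕜] [NormedAddCommGroup E] [NormedSpace 𝕜 E]
  [NormedAddCommGroup F] [NormedSpace 𝕜 F]

noncomputable def dualMap (f : E →L[𝕜] F) : StrongDual 𝕜 F →L[𝕜] StrongDual 𝕜 E :=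
  (compL 𝕜 E F 𝕜).flip f

@[simp]
theorem dualMap_apply (f : E →L[𝕜] F) (g : StrongDual 𝕜 F) : f.dualMap g = g ∘L f := rfl

end ContinuousLinearMap

section

variable {E F : Type*} [NormedAddCommGroup E] [NormedSpace ℂ E]
  [NormedAddCommGroup F] [NormedSpace ℂ F]

theorem isReflexiveSpace_iff :
    IsReflexiveSpace E ↔ ∀ u : StrongDual ℂ (StrongDual ℂ E), ∃ x : E, ∀ g, g x = u g := by
  simp only [IsReflexiveSpace, Function.Surjective, ContinuousLinearMap.ext_iff,
    NormedSpace.dual_def]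

namespace IsReflexiveSpace

theorem of_continuousLinearEquiv (e : E ≃L[ℂ] F) (hF : IsReflexiveSpace F) :
    IsReflexiveSpace E := by
  rw [isReflexiveSpace_iff] at hF ⊢
  intro u
  obtain ⟨y, hy⟩ := hF (u ∘L (e : E →L[ℂ] F).dualMap)
  refine ⟨e.symm y, fun g => ?_⟩
  have : (g ∘L (e.symm : F →L[ℂ] E)) ∘L (e : E →L[ℂ] F) = g := by ext; simp
  simpa [this] using hy (g ∘L (e.symm : F →L[ℂ] E))

theorem prod (hE : IsReflexiveSpace E) (hF : IsReflexiveSpace F) :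
    IsReflexiveSpace (E × F) := by
  rw [isReflexiveSpace_iff] at hE hF ⊢
  intro u
  obtain ⟨x, hx⟩ := hE (u ∘L (fst ℂ E F).dualMap)
  obtain ⟨y, hy⟩ := hF (u ∘L (snd ℂ E F).dualMap)
  refine ⟨(x, y), fun g => ?_⟩
  have hg : (g ∘L inl ℂ E F) ∘L fst ℂ E F + (g ∘L inr ℂ E F) ∘L snd ℂ E F = g := by
    refine ContinuousLinearMap.ext fun z => ?_
    simp [← map_add]
  calc g (x, y) = (g ∘L inl ℂ E F) x + (g ∘L inr ℂ E F) y := by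
        simp [← map_add]
    _ = u g := by rw [hx, hy]; simp [← map_add, hg]

theorem of_finiteDimensional [FiniteDimensional ℂ E] : IsReflexiveSpace E := by
  have h₁ : Module.finrank ℂ (StrongDual ℂ E) = Module.finrank ℂ E :=
    LinearMap.toContinuousLinearMap.finrank_eq.symm.trans Subspace.dual_finrank_eq
  have h₂ :
      Module.finrank ℂ (StrongDual ℂ (StrongDual ℂ E)) = Module.finrank ℂ (StrongDual ℂ E) :=
    LinearMap.toContinuousLinearMap.finrank_eq.symm.trans Subspace.dual_finrank_eq
  have hinj : Function.Injective
      (NormedSpace.inclusionInDoubleDual ℂ E : E →ₗ[ℂ] StrongDual ℂ (StrongDual ℂ E)) :=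
    (NormedSpace.inclusionInDoubleDualLi (E := E) ℂ).injective
  exact (LinearMap.injective_iff_surjective_of_finrank_eq_finrank (V := E)
    (V₂ := StrongDual ℂ (StrongDual ℂ E)) (h₂.trans h₁).symm).mp hinj

theorem submodule (hE : IsReflexiveSpace E) {Z : Submodule ℂ E} (hZ : IsClosed (Z : Set E)) :
    IsReflexiveSpace Z := by
  rw [isReflexiveSpace_iff] at hE ⊢
  intro u
  obtain ⟨x, hx⟩ := hE (u ∘L Z.subtypeL.dualMap)
  have hxZ : x ∈ Z := by
    by_contra hxZ
    obtain ⟨g, hg⟩ := SeparatingDual.exists_ne_zero (R := ℂ)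
      (mt (Submodule.Quotient.mk_eq_zero Z).mp hxZ)
    have h0 : Z.subtypeL.dualMap (g ∘L Z.mkQL) = 0 := by
      ext z; simp [(Submodule.Quotient.mk_eq_zero Z).mpr z.2]
    exact hg ((hx _).trans (by rw [comp_apply, h0, map_zero]))
  refine ⟨⟨x, hxZ⟩, fun h => ?_⟩
  obtain ⟨H, hH, -⟩ := exists_extension_norm_eq Z h
  have : H ∘L Z.subtypeL = h := by ext z; exact hH z
  calc h ⟨x, hxZ⟩ = H x := (hH _).symm
    _ = u h := by simpa [this] using hx H

theorem of_antilipschitzWith [CompleteSpace E] [CompleteSpace F] {f : E →L[ℂ] F} {C : NNReal}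
    (hf : AntilipschitzWith C f) (hF : IsReflexiveSpace F) : IsReflexiveSpace E := by
  have hclosed := hf.isClosed_range f.uniformContinuous
  exact of_continuousLinearEquiv (f.equivRange hf.injective hclosed)
    (hF.submodule (by rwa [LinearMap.coe_range]))

end IsReflexiveSpace

end

namespace IsCompactOperator

section

variable {𝕜 E : Type*} [NontriviallyNormedField 𝕜] [NormedAddCommGroup E] [NormedSpace 𝕜 E]
  {K : E →L[𝕜] E}

theorem finiteDimensional_ker_one_sub [CompleteSpace 𝕜] (hK : IsCompactOperator K) :
    FiniteDimensional 𝕜 ((1 - K).ker) := by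
  have hfix : ∀ y ∈ (1 - K).ker, K y = y := fun y hy =>
    (sub_eq_zero.mp (by simpa using LinearMap.mem_ker.mp hy)).symm
  have hmaps : ∀ y ∈ (1 - K).ker, (K : E →ₗ[𝕜] E) y ∈ (1 - K).ker := fun y hy => by
    rwa [coe_coe, hfix y hy]
  have hid : ⇑((K : E →ₗ[𝕜] E).restrict hmaps) = id := funext fun y => Subtype.ext (hfix y y.2)
  exact FiniteDimensional.of_isCompactOperator_id (hid ▸ hK.restrict hmaps (isClosed_ker _))

end

variable {𝕜 E : Type*} [RCLike 𝕜] [NormedAddCommGroup E] [NormedSpace 𝕜 E] {K : E →L[𝕜] E}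

open Filter Topology in
theorem exists_pos_mul_norm_le_of_disjoint_ker (hK : IsCompactOperator K)
    {V : Submodule 𝕜 E} (hV : IsClosed (V : Set E)) (hVK : Disjoint V ((1 - K).ker)) :
    ∃ c > 0, ∀ y ∈ V, c * ‖y‖ ≤ ‖(1 - K) y‖ := by
  by_contra! h
  have hz : ∀ n : ℕ, ∃ z ∈ V, ‖z‖ = 1 ∧ ‖(1 - K) z‖ < 1 / (n + 1) := by
    intro n
    obtain ⟨y, hyV, hy⟩ := h (1 / (n + 1)) (by positivity)
    have hy0 : y ≠ 0 := by rintro rfl; simp at hy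
    refine ⟨(‖y‖⁻¹ : 𝕜) • y, V.smul_mem _ hyV, norm_smul_inv_norm hy0, ?_⟩
    rw [map_smul, norm_smul, norm_inv, RCLike.norm_ofReal, abs_norm]
    rwa [inv_mul_lt_iff₀ (norm_pos_iff.mpr hy0), mul_comm]
  choose z hzV hz1 hzK using hz
  obtain ⟨C, hC, hKC⟩ := hK.image_closedBall_subset_compact 1
  obtain ⟨w, -, φ, hφ, hw⟩ := hC.tendsto_subseq
    (fun n => hKC ⟨z n, by simp [hz1], rfl⟩ : ∀ n, K (z n) ∈ C)
  have hsub : Tendsto (fun n => (1 - K) (z (φ n))) atTop (𝓝 0) :=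
    (squeeze_zero_norm (fun n => (hzK n).le) tendsto_one_div_add_atTop_nhds_zero_nat).comp
      hφ.tendsto_atTop
  have hzw : Tendsto (fun n => z (φ n)) atTop (𝓝 w) := by
    simpa using hsub.add hw
  have hwV : w ∈ V := hV.mem_of_tendsto hzw (Eventually.of_forall fun n => hzV (φ n))
  have hwK : w ∈ (1 - K).ker :=
    tendsto_nhds_unique (((1 - K).continuous.tendsto w).comp hzw) hsub
  have hw1 : ‖w‖ = 1 := tendsto_nhds_unique (hzw.norm) (by simp [hz1])
  simp [Submodule.disjoint_def.mp hVK w hwV hwK] at hw1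

end IsCompactOperator

theorem exists_isCompactOperator_one_sub_eq_comp {𝕜 X Y : Type*} [NontriviallyNormedField 𝕜]
    [NormedAddCommGroup X] [NormedSpace 𝕜 X] [NormedAddCommGroup Y] [NormedSpace 𝕜 Y]
    {T : X →L[𝕜] X} {S : Y →L[𝕜] Y} (hS : IsCompactOperator S)
    (E : Y × X →L[𝕜] X × Y) (F : X × Y →L[𝕜] Y × X)
    (h : T.prodMap (ContinuousLinearMap.id 𝕜 Y) =
      E ∘L S.prodMap (ContinuousLinearMap.id 𝕜 X) ∘L F) :
    ∃ (A : X →L[𝕜] Y) (B : Y →L[𝕜] X) (K : Y →L[𝕜] Y),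
      IsCompactOperator K ∧ 1 - K = A ∘L B := by
  refine ⟨snd 𝕜 X Y ∘L E ∘L inr 𝕜 Y X, snd 𝕜 Y X ∘L F ∘L inr 𝕜 X Y,
    (snd 𝕜 X Y ∘L E ∘L inl 𝕜 Y X) ∘L S ∘L (fst 𝕜 Y X ∘L F ∘L inr 𝕜 X Y),
    ?_, ContinuousLinearMap.ext fun y => ?_⟩
  · exact (hS.comp_clm (fst 𝕜 Y X ∘L F ∘L inr 𝕜 X Y)).clm_comp (snd 𝕜 X Y ∘L E ∘L inl 𝕜 Y X)
  have hy := congrArg Prod.snd (DFunLike.congr_fun h (0, y))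
  have hsplit : ∀ a b, E (a, b) = E (a, 0) + E (0, b) := fun a b => by
    rw [← map_add, Prod.mk_add_mk, add_zero, zero_add]
  simp only [comp_apply, coe_prodMap', Prod.map_apply, coe_id', id_eq, map_zero] at hy
  rw [hsplit, Prod.snd_add] at hy
  rw [sub_apply, one_apply_eq_self, sub_eq_iff_eq_add']
  simpa using hy

/-- If `T ∈ B(X)` is equivalent after extension to a compact `S ∈ B(Y)`
and `X` is reflexive, then `Y` is reflexive. -/
theorem reflexive_of_eae_compact
    (X Y : Type*) [NormedAddCommGroup X] [NormedSpace ℂ X] [CompleteSpace X]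
    [NormedAddCommGroup Y] [NormedSpace ℂ Y] [CompleteSpace Y]
    (T : X →L[ℂ] X) (S : Y →L[ℂ] Y) (hS : IsCompactOperator S)
    (hEAE : ∃ (E : (Y × X) ≃L[ℂ] (X × Y)) (F : (X × Y) ≃L[ℂ] (Y × X)),
      T.prodMap (ContinuousLinearMap.id ℂ Y) =
        (E : (Y × X) →L[ℂ] (X × Y)) ∘L
          (S.prodMap (ContinuousLinearMap.id ℂ X)) ∘L
            (F : (X × Y) →L[ℂ] (Y × X)))
    (hX : IsReflexiveSpace X) :
    IsReflexiveSpace Y := by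
  obtain ⟨E, F, hEF⟩ := hEAE
  obtain ⟨A, B, K, hK, hAB⟩ := exists_isCompactOperator_one_sub_eq_comp hS _ _ hEF
  have := hK.finiteDimensional_ker_one_sub
  obtain ⟨q, hq⟩ :=
    (Submodule.ClosedComplemented.of_finiteDimensional (1 - K).ker).exists_isTopCompl
  have := hq.isClosed'.completeSpace_coe
  obtain ⟨c, hc, hbound⟩ :=
    hK.exists_pos_mul_norm_le_of_disjoint_ker hq.isClosed' hq.isCompl.disjoint.symm
  have hB : AntilipschitzWith (‖A‖ / c).toNNReal (B ∘L q.subtypeL) :=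
    (B ∘L q.subtypeL).antilipschitz_of_bound fun y => by
      rw [Real.coe_toNNReal _ (by positivity), div_mul_eq_mul_div, le_div_iff₀ hc, mul_comm]
      calc c * ‖(y : Y)‖ ≤ ‖(1 - K) y‖ := hbound y y.2
        _ = ‖A (B y)‖ := by rw [hAB]; rfl
        _ ≤ ‖A‖ * ‖B y‖ := A.le_opNorm _
  exact IsReflexiveSpace.of_continuousLinearEquiv (Submodule.prodEquivOfIsTopCompl _ _ hq).symm
    (IsReflexiveSpace.of_finiteDimensional.prod (hX.of_antilipschitzWith hB))
end
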